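/- arXiv:0711.1108 — 7 statements merged into one kernel-verified Lean document; each statement's English description precedes it below -/
import Mathlib

section
/- If u : ℝ → ℝ is twice differentiable and satisfies u'' = (1 + (u')²)(x·u' − u) on an interval, then the energy E(x) = (u(x) − x·u'(x))/√(1 + u'(x)²) · exp(−(x² + u(x)²)/2) is constant on that interval (its derivative vanishes). -/
/-! With `w = u - x u'` and `s = √(1 + u'²)`, the equation says `u'' = -s² w`. Differentiating
`E = (w / s) · exp(-(x² + u²)/2)` gives `E' = exp(…)/s · (w' - w u' u''/s² - w (x + u u'))`, and
substituting `w' = -x u'' = x s² w` and `u''/s² = -w` leaves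
`w (x (1 + u'²) + (u - x u') u' - x - u u') = 0`. -/

open Real

noncomputable def shrinkerEnergy (u v : ℝ → ℝ) (x : ℝ) : ℝ :=
  (u x - x * v x) / √(1 + v x ^ 2) * exp (-(x ^ 2 + u x ^ 2) / 2)

theorem hasDerivAt_shrinkerEnergy {u v : ℝ → ℝ} {x q : ℝ}
    (hu : HasDerivAt u (v x) x) (hv : HasDerivAt v q x) :
    HasDerivAt (shrinkerEnergy u v)
      (exp (-(x ^ 2 + u x ^ 2) / 2) / √(1 + v x ^ 2) *
        (-(x * q) - (u x - x * v x) * v x * q / (1 + v x ^ 2)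
          - (u x - x * v x) * (x + u x * v x))) x := by
  have hpos : 0 < 1 + v x ^ 2 := by positivity
  have hs : √(1 + v x ^ 2) ≠ 0 := (sqrt_pos.mpr hpos).ne'
  have hsq : √(1 + v x ^ 2) ^ 2 = 1 + v x ^ 2 := sq_sqrt hpos.le
  have hw := hu.sub ((hasDerivAt_id x).mul hv)
  have hroot := ((hv.fun_pow 2).const_add 1).sqrt hpos.ne'
  have hgauss := ((((hasDerivAt_pow 2 x).add (hu.fun_pow 2)).neg).div_const 2).exp
  refine ((hw.fun_div hroot hs).fun_mul hgauss).congr_deriv ?_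
  -- so that `1 + v x ^ 2` is replaced by `s ^ 2` outside the root only
  generalize √(1 + v x ^ 2) = s at hs hsq ⊢
  rw [← hsq]
  norm_num
  field_simp
  ring

theorem hasDerivAt_shrinkerEnergy_eq_zero {u v : ℝ → ℝ} {x : ℝ}
    (hu : HasDerivAt u (v x) x)
    (hv : HasDerivAt v ((1 + v x ^ 2) * (x * v x - u x)) x) :
    HasDerivAt (shrinkerEnergy u v) 0 x := by
  refine (hasDerivAt_shrinkerEnergy hu hv).congr_deriv ?_
  field_simp
  ring

theorem energy_first_integral_general
    (u : ℝ → ℝ) (I : Set ℝ)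
    (hu : ∀ x ∈ I, DifferentiableAt ℝ u x)
    (hu' : ∀ x ∈ I, DifferentiableAt ℝ (deriv u) x)
    (hode : ∀ x ∈ I,
      deriv (deriv u) x = (1 + (deriv u x) ^ 2) * (x * deriv u x - u x)) :
    ∀ x ∈ I,
      deriv (fun x => (u x - x * deriv u x) / Real.sqrt (1 + (deriv u x) ^ 2)
        * Real.exp (-(x ^ 2 + (u x) ^ 2) / 2)) x = 0 := by
  intro x hx
  have hu'' : HasDerivAt (deriv u) ((1 + deriv u x ^ 2) * (x * deriv u x - u x)) x :=
    hode x hx ▸ (hu' x hx).hasDerivAt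
  exact (hasDerivAt_shrinkerEnergy_eq_zero (hu x hx).hasDerivAt hu'').deriv

/-- First integral for the self-similar shrinking curve equation (graph form):
if `u'' = (1+(u')²)(x u' - u)` on an open interval, then the energy
`E(x) = (u - x u')/√(1+(u')²) · exp(-(x²+u²)/2)` has vanishing derivative there. -/
theorem energy_first_integral
    (u : ℝ → ℝ) (I : Set ℝ) (hI : IsOpen I) (hconn : I.OrdConnected)
    (hu : ∀ x ∈ I, DifferentiableAt ℝ u x)
    (hu' : ∀ x ∈ I, DifferentiableAt ℝ (deriv u) x)
    (hode : ∀ x ∈ I,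
      deriv (deriv u) x = (1 + (deriv u x) ^ 2) * (x * deriv u x - u x)) :
    ∀ x ∈ I,
      deriv (fun x => (u x - x * deriv u x) / Real.sqrt (1 + (deriv u x) ^ 2)
        * Real.exp (-(x ^ 2 + (u x) ^ 2) / 2)) x = 0 :=
  energy_first_integral_general u I hu hu' hode
end

section
/- The function A(η) = (8η²·log η − 4η² + 3)/(6η·(log η)²) is strictly increasing on (1, ∞). -/
/-!
Writing `L = log η`, the quotient rule gives
`A'(η) = (η² (8L² - 12L + 8) - 3L - 6) / (6 η² L³)`.
The quadratic `8L² - 12L + 8` is positive and `η ≥ 1 + L`, so the numerator is at least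
`(1 + L)² (8L² - 12L + 8) - 3L - 6 = 2 (2L² - 1)² + 4L³ + L`, which is positive for `L > 0`.
-/

open Real

namespace LensNetwork

noncomputable def A (η : ℝ) : ℝ :=
  (8 * η ^ 2 * log η - 4 * η ^ 2 + 3) / (6 * η * (log η) ^ 2)

noncomputable def derivA (η : ℝ) : ℝ :=
  (η ^ 2 * (8 * (log η) ^ 2 - 12 * log η + 8) - 3 * log η - 6) / (6 * η ^ 2 * (log η) ^ 3)

theorem hasDerivAt_A {η : ℝ} (hη : 1 < η) : HasDerivAt A (derivA η) η := by
  have hη0 : η ≠ 0 := by positivity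
  have hL : log η ≠ 0 := (log_pos hη).ne'
  have hlog : HasDerivAt log η⁻¹ η := hasDerivAt_log hη0
  have hsq : HasDerivAt (fun x : ℝ => x ^ 2) (2 * η) η := by
    simpa using hasDerivAt_pow 2 η
  have hnum := (((hsq.const_mul 8).mul hlog).sub (hsq.const_mul 4)).add_const 3
  have hden := ((hasDerivAt_id η).const_mul 6).mul (hlog.pow 2)
  refine (hnum.div hden (by simp [hη0, hL])).congr_deriv ?_
  simp only [derivA, Pi.mul_apply, Pi.sub_apply, Pi.pow_apply, id, Nat.cast_ofNat]
  field_simp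
  ring

theorem three_mul_log_add_six_lt {η : ℝ} (hη : 1 < η) :
    3 * log η + 6 < η ^ 2 * (8 * (log η) ^ 2 - 12 * log η + 8) := by
  set L := log η
  have hL : 0 < L := log_pos hη
  have hLη : 1 + L ≤ η := by linarith [log_le_sub_one_of_pos (by positivity : 0 < η)]
  have hq : 0 < 8 * L ^ 2 - 12 * L + 8 := by nlinarith [sq_nonneg (4 * L - 3)]
  calc 3 * L + 6 < (1 + L) ^ 2 * (8 * L ^ 2 - 12 * L + 8) := by
        nlinarith [sq_nonneg (2 * L ^ 2 - 1), pow_pos hL 3]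
    _ ≤ η ^ 2 * (8 * L ^ 2 - 12 * L + 8) := by gcongr

theorem derivA_pos {η : ℝ} (hη : 1 < η) : 0 < derivA η := by
  have hL : 0 < log η := log_pos hη
  have hη0 : 0 < η := by positivity
  exact div_pos (by linarith [three_mul_log_add_six_lt hη]) (by positivity)

end LensNetwork

/-- `A(η) = (8η² log η - 4η² + 3)/(6η (log η)²)` is strictly increasing on `(1, ∞)`. -/
theorem A_strictMonoOn :
    StrictMonoOn
      (fun η : ℝ => (8 * η ^ 2 * Real.log η - 4 * η ^ 2 + 3) / (6 * η * (Real.log η) ^ 2))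
      (Set.Ioi 1) := by
  show StrictMonoOn LensNetwork.A (Set.Ioi 1)
  refine strictMonoOn_of_hasDerivWithinAt_pos (f' := LensNetwork.derivA) (convex_Ioi 1)
    (fun η hη => (LensNetwork.hasDerivAt_A hη).continuousAt.continuousWithinAt) ?_ ?_ <;>
    rw [interior_Ioi]
  · exact fun η hη => (LensNetwork.hasDerivAt_A hη).hasDerivWithinAt
  · exact fun η hη => LensNetwork.derivA_pos hη
end

section
/- For fixed η > 1, the function x ↦ (x − 1)/(1 − x² + ((4η² − 3)/(3·log η))·log x) is increasing on (1, η], on the set where the denominator is positive. -/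
/-- Key inequality: for `1 < x ≤ y`, `(x-1) * log y ≤ (y-1) * log x`. -/
lemma key_log_ineq {x y : ℝ} (hx : 1 < x) (hxy : x ≤ y) :
    (x - 1) * Real.log y ≤ (y - 1) * Real.log x := by
  have hx0 : (0:ℝ) < x := by linarith
  have hy0 : (0:ℝ) < y := by linarith
  -- log(y/x) ≤ y/x - 1
  have h1 : Real.log y - Real.log x ≤ y / x - 1 := by
    have := Real.log_le_sub_one_of_pos (div_pos hy0 hx0)
    rwa [Real.log_div (ne_of_gt hy0) (ne_of_gt hx0)] at this
  have h1' : (Real.log y - Real.log x) * x ≤ y - x := by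
    have := mul_le_mul_of_nonneg_right h1 (le_of_lt hx0)
    have hxne : x ≠ 0 := ne_of_gt hx0
    calc (Real.log y - Real.log x) * x ≤ (y / x - 1) * x := this
      _ = y - x := by field_simp
  -- 1 - 1/x ≤ log x, i.e. x - 1 ≤ x * log x
  have h2 : x - 1 ≤ x * Real.log x := by
    have := Real.log_le_sub_one_of_pos (inv_pos.mpr hx0)
    rw [Real.log_inv] at this
    have := mul_le_mul_of_nonneg_left this (le_of_lt hx0)
    have hxne : x ≠ 0 := ne_of_gt hx0
    have hinv : x * (x⁻¹ - 1) = 1 - x := by field_simp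
    nlinarith
  nlinarith [mul_nonneg (sub_nonneg.mpr hx.le) (sub_nonneg.mpr hxy),
    mul_le_mul_of_nonneg_left h1' (sub_nonneg.mpr hx.le),
    mul_le_mul_of_nonneg_left h2 (sub_nonneg.mpr hxy)]

/-- For fixed `η > 1`, the function `x ↦ (x-1)/(1 - x² + ((4η²-3)/(3 log η)) log x)`
is increasing on the part of `(1, η]` where the denominator is positive. -/
theorem quotient_monotoneOn (η : ℝ) (hη : 1 < η) :
    MonotoneOn
      (fun x : ℝ =>
        (x - 1) / (1 - x ^ 2 + ((4 * η ^ 2 - 3) / (3 * Real.log η)) * Real.log x))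
      {x : ℝ | x ∈ Set.Ioc 1 η ∧
        0 < 1 - x ^ 2 + ((4 * η ^ 2 - 3) / (3 * Real.log η)) * Real.log x} := by
  intro x hx y hy hxy
  obtain ⟨⟨hx1, hxη⟩, hdx⟩ := hx
  obtain ⟨⟨hy1, hyη⟩, hdy⟩ := hy
  set c : ℝ := (4 * η ^ 2 - 3) / (3 * Real.log η) with hc
  have hlogη : 0 < Real.log η := Real.log_pos hη
  have hcpos : 0 < c := by
    apply div_pos
    · nlinarith
    · linarith
  simp only
  rw [div_le_div_iff₀ hdx hdy]
  have hkey := key_log_ineq hx1 hxy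
  nlinarith [mul_le_mul_of_nonneg_left hkey hcpos.le,
    mul_nonneg (mul_nonneg (sub_nonneg.mpr hx1.le) (sub_nonneg.mpr hy1.le))
      (sub_nonneg.mpr hxy)]
end

section
/- For any constant c with 4 ≤ c ≤ 5, the function η ↦ (1 + c/(4η² − 3))·log η is increasing for η ≥ 1. -/
/-- For any `4 ≤ c ≤ 5`, the function `η ↦ (1 + c/(4η² - 3)) · log η`
is increasing on `[1, ∞)`. -/
theorem bracket_monotoneOn (c : ℝ) (hc4 : 4 ≤ c) (hc5 : c ≤ 5) :
    MonotoneOn (fun η : ℝ => (1 + c / (4 * η ^ 2 - 3)) * Real.log η) (Set.Ici 1) := by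
  have hder : ∀ x : ℝ, 1 < x →
      HasDerivAt (fun η : ℝ => (1 + c / (4 * η ^ 2 - 3)) * Real.log η)
        ((0 * (4 * x ^ 2 - 3) - c * (4 * (2 * x ^ 1))) / (4 * x ^ 2 - 3) ^ 2 * Real.log x
          + (1 + c / (4 * x ^ 2 - 3)) * x⁻¹) x := by
    intro x hx1
    have hx0 : (0:ℝ) < x := by linarith
    have hq : (0:ℝ) < 4 * x ^ 2 - 3 := by nlinarith
    exact (((hasDerivAt_const x c).div
      (((hasDerivAt_pow 2 x).const_mul 4).sub_const 3) hq.ne').const_add 1).mul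
      (Real.hasDerivAt_log hx0.ne')
  apply monotoneOn_of_deriv_nonneg (convex_Ici 1)
  · apply ContinuousOn.mul
    · apply continuousOn_const.add
      apply ContinuousOn.div continuousOn_const (by fun_prop)
      intro x hx
      have : (1:ℝ) ≤ x := hx
      nlinarith
    · exact Real.continuousOn_log.mono (fun x hx => by
        simp only [Set.mem_compl_iff, Set.mem_singleton_iff]
        have : (1:ℝ) ≤ x := hx
        intro h; linarith [h ▸ this])
  · rw [interior_Ici]
    exact fun x hx => ((hder x hx).differentiableAt).differentiableWithinAt
  · intro x hx
    rw [interior_Ici] at hx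
    have hx1 : (1:ℝ) < x := hx
    have hx0 : (0:ℝ) < x := by linarith
    have hq : (0:ℝ) < 4 * x ^ 2 - 3 := by nlinarith
    rw [(hder x hx1).deriv]
    have hL0 : 0 ≤ Real.log x := Real.log_nonneg hx1.le
    have hL1 : Real.log x ≤ x - 1 := Real.log_le_sub_one_of_pos hx0
    have hE : 0 ≤ (4*x^2-3)^2 + c*(4*x^2-3) - 8*c*x^2*Real.log x := by
      rcases le_or_gt 0 ((4*x^2-3) - 8*x^2*Real.log x) with hB | hB
      · nlinarith [mul_nonneg (by linarith : (0:ℝ) ≤ c) hB, sq_nonneg (4*x^2-3)]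
      · have h5 : 0 ≤ (4*x^2-3)^2 + 5*((4*x^2-3) - 8*x^2*Real.log x) := by
          nlinarith [mul_le_mul_of_nonneg_left hL1 (by positivity : (0:ℝ) ≤ 40*x^2),
            sq_nonneg (x-1), sq_nonneg (x^2-x), sq_nonneg ((x-1)^2),
            mul_nonneg (mul_nonneg (by linarith : (0:ℝ) ≤ x-1) (by linarith : (0:ℝ) ≤ x-1)) (by linarith : (0:ℝ) ≤ x-1)]
        nlinarith [mul_nonpos_of_nonneg_of_nonpos (by linarith : (0:ℝ) ≤ 5 - c) hB.le]
    have heq : (0 * (4 * x ^ 2 - 3) - c * (4 * (2 * x ^ 1))) / (4 * x ^ 2 - 3) ^ 2 * Real.log x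
          + (1 + c / (4 * x ^ 2 - 3)) * x⁻¹
        = ((4*x^2-3)^2 + c*(4*x^2-3) - 8*c*x^2*Real.log x) / (x * (4*x^2-3)^2) := by
      field_simp
      ring
    rw [heq]
    exact div_nonneg hE (by positivity)
end

section
/- Let u : [0, x₀] → ℝ be C² with u(0) = h > 0, u'(0) = 0, and u'' = (1 + (u')²)(x·u' − u) with u'' < 0 on (0, x₀]. Then for all x in the domain, x·u'(x) − u(x) ≤ −h − (h/2)x², u'(x) ≤ −h·x − (h/6)x³, and u(x) ≤ h − (h/2)x² − (h/24)x⁴. Consequently u(x) < 0 for x ≥ √(−6 + 2√15). -/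
/-!
Write `f = x u' - u`, so that `f' = x u''` and the equation reads `u'' = (1 + u'²) f`. Concavity
makes `f` decrease from `f(0) = -h`, hence `f < 0` and `u'' ≤ f < -h`. Each bound then feeds the
next by comparing derivatives with a polynomial barrier that agrees at `0`: `u'' < -h` gives
`f < -h - (h/2)x²`, which bounds `u''` and hence `u'`, which in turn bounds `u`. The last barrier
`h(24 - 12x² - x⁴)/24` vanishes at `x² = -6 + 2√15`.
-/

open Set

theorem image_lt_of_deriv_lt_deriv_boundary {f f' B B' : ℝ → ℝ} {a b : ℝ}
    (hf : ContinuousOn f (Icc a b)) (hf' : ∀ x ∈ Ioo a b, HasDerivAt f (f' x) x)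
    (ha : f a ≤ B a) (hB : ∀ x, HasDerivAt B (B' x) x)
    (bound : ∀ x ∈ Ioo a b, f' x < B' x) : ∀ x ∈ Ioc a b, f x < B x := by
  have hanti : StrictAntiOn (f - B) (Icc a b) := by
    refine strictAntiOn_of_deriv_neg (convex_Icc a b)
      (hf.sub fun x _ => (hB x).continuousAt.continuousWithinAt) fun x hx => ?_
    rw [interior_Icc] at hx
    rw [((hf' x hx).sub (hB x)).deriv]
    exact sub_neg.2 (bound x hx)
  intro x hx
  have := hanti (left_mem_Icc.2 (hx.1.le.trans hx.2)) (Ioc_subset_Icc_self hx) hx.1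
  simp only [Pi.sub_apply] at this
  linarith

theorem hasDerivAt_mul_deriv_sub {u : ℝ → ℝ} {x : ℝ} (hu : DifferentiableAt ℝ u x)
    (hu' : DifferentiableAt ℝ (deriv u) x) :
    HasDerivAt (fun y => y * deriv u y - u y) (x * deriv (deriv u) x) x :=
  (((hasDerivAt_id x).mul hu'.hasDerivAt).sub hu.hasDerivAt).congr_deriv (by simp)

theorem quartic_barrier_nonpos {h x : ℝ} (hh : 0 ≤ h) (hx : √(-6 + 2 * √15) ≤ x) :
    h - h / 2 * x ^ 2 - h / 24 * x ^ 4 ≤ 0 := by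
  have h15 : √15 ^ 2 = 15 := Real.sq_sqrt (by norm_num)
  have hroot : 0 ≤ -6 + 2 * √15 := by nlinarith [Real.sqrt_nonneg 15]
  have hx2 : -6 + 2 * √15 ≤ x ^ 2 := by
    rw [← Real.sq_sqrt hroot]
    exact pow_le_pow_left₀ (Real.sqrt_nonneg _) hx 2
  have hquad : 24 - 12 * x ^ 2 - x ^ 4 ≤ 0 := by nlinarith
  nlinarith

theorem sqrt_neg_six_add_two_sqrt_fifteen_pos : 0 < √(-6 + 2 * √15) := by
  have : 3 < √15 := by rw [Real.lt_sqrt (by norm_num)]; norm_num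
  exact Real.sqrt_pos.2 (by linarith)

theorem le_of_eq_one_add_sq_mul_of_neg {a b c : ℝ} (hc : c = (1 + a ^ 2) * b) (hneg : c < 0) :
    c ≤ b := by
  nlinarith [sq_nonneg a]

theorem mul_deriv_sub_lt_of_ode {u : ℝ → ℝ} {x₀ h : ℝ}
    (hcont : ContinuousOn u (Icc 0 x₀)) (hcont' : ContinuousOn (deriv u) (Icc 0 x₀))
    (hdiff : ∀ x ∈ Ioo 0 x₀, DifferentiableAt ℝ u x)
    (hdiff' : ∀ x ∈ Ioo 0 x₀, DifferentiableAt ℝ (deriv u) x) (hu0 : u 0 = h)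
    (hode : ∀ x ∈ Ioo 0 x₀,
      deriv (deriv u) x = (1 + (deriv u x) ^ 2) * (x * deriv u x - u x))
    (hconc : ∀ x ∈ Ioo 0 x₀, deriv (deriv u) x < 0) :
    ∀ x ∈ Ioc 0 x₀, x * deriv u x - u x < -h - h / 2 * x ^ 2 := by
  set f : ℝ → ℝ := fun x => x * deriv u x - u x with hf
  have hfc : ContinuousOn f (Icc 0 x₀) := (continuousOn_id.mul hcont').sub hcont
  have hf' : ∀ x ∈ Ioo 0 x₀, HasDerivAt f (x * deriv (deriv u) x) x :=
    fun x hx => hasDerivAt_mul_deriv_sub (hdiff x hx) (hdiff' x hx)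
  have hf0 : f 0 = -h := by simp [hf, hu0]
  have hf_lt : ∀ x ∈ Ioc 0 x₀, f x < -h :=
    image_lt_of_deriv_lt_deriv_boundary hfc hf' hf0.le (fun _ => hasDerivAt_const _ _)
      fun x hx => mul_neg_of_pos_of_neg hx.1 (hconc x hx)
  have hu''_lt : ∀ x ∈ Ioo 0 x₀, deriv (deriv u) x < -h := fun x hx =>
    (le_of_eq_one_add_sq_mul_of_neg (hode x hx) (hconc x hx)).trans_lt
      (hf_lt x (Ioo_subset_Ioc_self hx))
  have hB : ∀ x, HasDerivAt (fun x => -h - h / 2 * x ^ 2) (-(h * x)) x := fun x =>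
    (((hasDerivAt_pow 2 x).const_mul (h / 2)).const_sub (-h)).congr_deriv (by push_cast; ring)
  exact image_lt_of_deriv_lt_deriv_boundary hfc hf' (by simp [hu0]) hB
    fun x hx => by nlinarith [hu''_lt x hx, hx.1]

theorem barrier_lt_of_ode {u : ℝ → ℝ} {x₀ h : ℝ}
    (hcont : ContinuousOn u (Icc 0 x₀)) (hcont' : ContinuousOn (deriv u) (Icc 0 x₀))
    (hdiff : ∀ x ∈ Ioo 0 x₀, DifferentiableAt ℝ u x)
    (hdiff' : ∀ x ∈ Ioo 0 x₀, DifferentiableAt ℝ (deriv u) x)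
    (hu0 : u 0 = h) (hu'0 : deriv u 0 = 0)
    (hode : ∀ x ∈ Ioo 0 x₀,
      deriv (deriv u) x = (1 + (deriv u x) ^ 2) * (x * deriv u x - u x))
    (hconc : ∀ x ∈ Ioo 0 x₀, deriv (deriv u) x < 0) :
    ∀ x ∈ Ioc 0 x₀,
      x * deriv u x - u x < -h - h / 2 * x ^ 2 ∧
      deriv u x < -(h * x) - h / 6 * x ^ 3 ∧
      u x < h - h / 2 * x ^ 2 - h / 24 * x ^ 4 := by
  have hf_barrier := mul_deriv_sub_lt_of_ode hcont hcont' hdiff hdiff' hu0 hode hconc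
  have hB₂ : ∀ x, HasDerivAt (fun x => -(h * x) - h / 6 * x ^ 3) (-h - h / 2 * x ^ 2) x :=
    fun x => (((hasDerivAt_id x).const_mul h).neg.sub
      ((hasDerivAt_pow 3 x).const_mul (h / 6))).congr_deriv (by push_cast; ring)
  have hB₃ : ∀ x, HasDerivAt (fun x => h - h / 2 * x ^ 2 - h / 24 * x ^ 4)
      (-(h * x) - h / 6 * x ^ 3) x := fun x =>
    ((((hasDerivAt_pow 2 x).const_mul (h / 2)).const_sub h).sub
      ((hasDerivAt_pow 4 x).const_mul (h / 24))).congr_deriv (by push_cast; ring)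
  have hu'_barrier : ∀ x ∈ Ioc 0 x₀, deriv u x < -(h * x) - h / 6 * x ^ 3 :=
    image_lt_of_deriv_lt_deriv_boundary hcont' (fun x hx => (hdiff' x hx).hasDerivAt)
      (by simp [hu'0]) hB₂ fun x hx =>
        (le_of_eq_one_add_sq_mul_of_neg (hode x hx) (hconc x hx)).trans_lt
          (hf_barrier x (Ioo_subset_Ioc_self hx))
  have hu_barrier : ∀ x ∈ Ioc 0 x₀, u x < h - h / 2 * x ^ 2 - h / 24 * x ^ 4 :=
    image_lt_of_deriv_lt_deriv_boundary hcont (fun x hx => (hdiff x hx).hasDerivAt)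
      (by simp [hu0]) hB₃ fun x hx => hu'_barrier x (Ioo_subset_Ioc_self hx)
  exact fun x hx => ⟨hf_barrier x hx, hu'_barrier x hx, hu_barrier x hx⟩

-- `deriv` is `0` wherever differentiability fails, so a nonzero second derivative certifies
-- differentiability of `deriv u`, even at the endpoints of `[0, x₀]`.
theorem differentiableAt_deriv_of_ode {u : ℝ → ℝ} {x₀ h : ℝ} (hh : 0 < h)
    (hu0 : u 0 = h) (hu'0 : deriv u 0 = 0)
    (hode : ∀ x ∈ Icc 0 x₀,
      deriv (deriv u) x = (1 + (deriv u x) ^ 2) * (x * deriv u x - u x))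
    (hconc : ∀ x ∈ Ioc 0 x₀, deriv (deriv u) x < 0) :
    ∀ x ∈ Icc 0 x₀, DifferentiableAt ℝ (deriv u) x := by
  intro x hx
  apply differentiableAt_of_deriv_ne_zero
  rcases hx.1.eq_or_lt with rfl | hpos
  · simpa [hode 0 hx, hu0, hu'0] using hh.ne'
  · exact (hconc x ⟨hpos, hx.2⟩).ne

theorem barrier_estimates_general (u : ℝ → ℝ) (x₀ h : ℝ) (hh : 0 < h)
    (hC2 : ContDiffOn ℝ 2 u (Set.Icc 0 x₀))
    (hu0 : u 0 = h) (hu'0 : deriv u 0 = 0)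
    (hode : ∀ x ∈ Set.Icc 0 x₀,
      deriv (deriv u) x = (1 + (deriv u x) ^ 2) * (x * deriv u x - u x))
    (hconc : ∀ x ∈ Set.Ioc 0 x₀, deriv (deriv u) x < 0) :
    (∀ x ∈ Set.Icc 0 x₀,
      x * deriv u x - u x ≤ -h - h / 2 * x ^ 2 ∧
      deriv u x ≤ -(h * x) - h / 6 * x ^ 3 ∧
      u x ≤ h - h / 2 * x ^ 2 - h / 24 * x ^ 4) ∧
    (∀ x ∈ Set.Icc 0 x₀, Real.sqrt (-6 + 2 * Real.sqrt 15) ≤ x → u x < 0) := by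
  have hdiff' := differentiableAt_deriv_of_ode hh hu0 hu'0 hode hconc
  have hbarrier := barrier_lt_of_ode hC2.continuousOn
    (fun x hx => (hdiff' x hx).continuousAt.continuousWithinAt)
    (fun x hx => (hC2.contDiffAt (Icc_mem_nhds hx.1 hx.2)).differentiableAt (by norm_num))
    (fun x hx => hdiff' x (Ioo_subset_Icc_self hx)) hu0 hu'0
    (fun x hx => hode x (Ioo_subset_Icc_self hx)) (fun x hx => hconc x (Ioo_subset_Ioc_self hx))
  refine ⟨fun x hx => ?_, fun x hx hsx => ?_⟩
  · rcases hx.1.eq_or_lt with rfl | hpos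
    · simp [hu0, hu'0]
    · obtain ⟨hf, hu', hu⟩ := hbarrier x ⟨hpos, hx.2⟩
      exact ⟨hf.le, hu'.le, hu.le⟩
  · have hpos : 0 < x := sqrt_neg_six_add_two_sqrt_fifteen_pos.trans_le hsx
    exact (hbarrier x ⟨hpos, hx.2⟩).2.2.trans_le (quartic_barrier_nonpos hh.le hsx)

/-- Barrier estimates for the self-similar profile ODE with symmetric initial
data of height `h`: `x u' - u ≤ -h - (h/2)x²`, `u' ≤ -h x - (h/6)x³`,
`u ≤ h - (h/2)x² - (h/24)x⁴`; consequently `u(x) < 0` for `x ≥ √(-6 + 2√15)`. -/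
theorem barrier_estimates (u : ℝ → ℝ) (x₀ h : ℝ) (hx₀ : 0 < x₀) (hh : 0 < h)
    (hC2 : ContDiffOn ℝ 2 u (Set.Icc 0 x₀))
    (hu0 : u 0 = h) (hu'0 : deriv u 0 = 0)
    (hode : ∀ x ∈ Set.Icc 0 x₀,
      deriv (deriv u) x = (1 + (deriv u x) ^ 2) * (x * deriv u x - u x))
    (hconc : ∀ x ∈ Set.Ioc 0 x₀, deriv (deriv u) x < 0) :
    (∀ x ∈ Set.Icc 0 x₀,
      x * deriv u x - u x ≤ -h - h / 2 * x ^ 2 ∧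
      deriv u x ≤ -(h * x) - h / 6 * x ^ 3 ∧
      u x ≤ h - h / 2 * x ^ 2 - h / 24 * x ^ 4) ∧
    (∀ x ∈ Set.Icc 0 x₀, Real.sqrt (-6 + 2 * Real.sqrt 15) ≤ x → u x < 0) :=
  barrier_estimates_general u x₀ h hh hC2 hu0 hu'0 hode hconc
end

section
/- Under the hypotheses of the previous barrier estimates and additionally u'(x)² ≥ h²(x + x³/6)², one has u(x) ≤ h − h·(x²/2 + (1/12)(1/2 + h²)x⁴ + (h²/36)x⁶ + (h²/288)x⁸ + (h²/6480)x¹⁰) for x in the domain. -/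
/-!
The ODE together with `x u' - u ≤ -h(1 + x²/2)` and `(u')² ≥ h²(x + x³/6)²` bounds `u''` above by
an explicit even polynomial of degree eight, which is negative; in particular `u''` is never the
junk value `0`, so `u'` is differentiable on `[0, x₀]`. Comparing `u'` and then `u` with the first
and second antiderivatives of that polynomial by the mean value theorem, starting from `u'(0) = 0`
and `u(0) = h`, gives the degree-ten barrier.
-/

open Set

noncomputable section

def barrier (h x : ℝ) : ℝ :=
  h - h * (x ^ 2 / 2 + 1 / 12 * (1 / 2 + h ^ 2) * x ^ 4
    + h ^ 2 / 36 * x ^ 6 + h ^ 2 / 288 * x ^ 8 + h ^ 2 / 6480 * x ^ 10)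

def barrierSlope (h x : ℝ) : ℝ :=
  -h * (x + (1 / 2 + h ^ 2) / 3 * x ^ 3 + h ^ 2 / 6 * x ^ 5 + h ^ 2 / 36 * x ^ 7
    + h ^ 2 / 648 * x ^ 9)

def barrierCurvature (h x : ℝ) : ℝ :=
  -h * (1 + (1 / 2 + h ^ 2) * x ^ 2 + 5 / 6 * h ^ 2 * x ^ 4 + 7 / 36 * h ^ 2 * x ^ 6
    + 1 / 72 * h ^ 2 * x ^ 8)

end

theorem hasDerivAt_barrier (h x : ℝ) : HasDerivAt (barrier h) (barrierSlope h x) x := by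
  have := (hasDerivAt_const x h).sub <| HasDerivAt.const_mul h <|
    ((((hasDerivAt_pow 2 x).div_const 2).add
      ((hasDerivAt_pow 4 x).const_mul (1 / 12 * (1 / 2 + h ^ 2)))).add
      ((hasDerivAt_pow 6 x).const_mul (h ^ 2 / 36))).add
      ((hasDerivAt_pow 8 x).const_mul (h ^ 2 / 288)) |>.add
      ((hasDerivAt_pow 10 x).const_mul (h ^ 2 / 6480))
  refine this.congr_deriv ?_
  unfold barrierSlope
  push_cast
  ring

theorem hasDerivAt_barrierSlope (h x : ℝ) :
    HasDerivAt (barrierSlope h) (barrierCurvature h x) x := by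
  have := HasDerivAt.const_mul (-h) <|
    ((((hasDerivAt_id x).add ((hasDerivAt_pow 3 x).const_mul ((1 / 2 + h ^ 2) / 3))).add
      ((hasDerivAt_pow 5 x).const_mul (h ^ 2 / 6))).add
      ((hasDerivAt_pow 7 x).const_mul (h ^ 2 / 36))).add
      ((hasDerivAt_pow 9 x).const_mul (h ^ 2 / 648))
  refine this.congr_deriv ?_
  unfold barrierCurvature
  push_cast
  ring

theorem barrierCurvature_neg {h : ℝ} (hh : 0 < h) (x : ℝ) : barrierCurvature h x < 0 :=
  mul_neg_of_neg_of_pos (neg_lt_zero.2 hh) (by positivity)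

theorem mul_le_barrierCurvature {h x p F : ℝ} (hh : 0 ≤ h) (hF : F ≤ -(h * (1 + x ^ 2 / 2)))
    (hp : h ^ 2 * (x + x ^ 3 / 6) ^ 2 ≤ p ^ 2) : (1 + p ^ 2) * F ≤ barrierCurvature h x := by
  have hM : 0 ≤ h * (1 + x ^ 2 / 2) := by positivity
  calc (1 + p ^ 2) * F ≤ (1 + p ^ 2) * -(h * (1 + x ^ 2 / 2)) := by gcongr
    _ ≤ (1 + h ^ 2 * (x + x ^ 3 / 6) ^ 2) * -(h * (1 + x ^ 2 / 2)) := by nlinarith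
    _ = barrierCurvature h x := by unfold barrierCurvature; ring

theorem le_of_hasDerivAt_le {f f' g g' : ℝ → ℝ} {a b : ℝ} (hab : a ≤ b)
    (hf : ContinuousOn f (Icc a b)) (hf' : ∀ x ∈ Ioo a b, HasDerivAt f (f' x) x)
    (hg : ∀ x, HasDerivAt g (g' x) x) (hle : ∀ x ∈ Ioo a b, f' x ≤ g' x) (ha : f a ≤ g a) :
    f b ≤ g b := by
  have hanti : AntitoneOn (f - g) (Icc a b) := by
    refine antitoneOn_of_hasDerivWithinAt_nonpos (convex_Icc a b)
      (hf.sub fun x _ => (hg x).continuousAt.continuousWithinAt) (f' := f' - g') ?_ ?_ <;>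
      rw [interior_Icc] <;> intro x hx
    · exact ((hf' x hx).sub (hg x)).hasDerivWithinAt
    · exact sub_nonpos.2 (hle x hx)
  have := hanti (left_mem_Icc.2 hab) (right_mem_Icc.2 hab) hab
  simp only [Pi.sub_apply] at this
  linarith

theorem refined_barrier_estimate_general (u : ℝ → ℝ) (x₀ h : ℝ) (hh : 0 < h)
    (hC2 : ContDiffOn ℝ 2 u (Set.Icc 0 x₀))
    (hu0 : u 0 = h) (hu'0 : deriv u 0 = 0)
    (hode : ∀ x ∈ Set.Icc 0 x₀,
      deriv (deriv u) x = (1 + (deriv u x) ^ 2) * (x * deriv u x - u x))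
    (hfu : ∀ x ∈ Set.Icc 0 x₀, x * deriv u x - u x ≤ -(h * (1 + x ^ 2 / 2)))
    (hsq : ∀ x ∈ Set.Icc 0 x₀,
      h ^ 2 * (x + x ^ 3 / 6) ^ 2 ≤ (deriv u x) ^ 2) :
    ∀ x ∈ Set.Icc 0 x₀,
      u x ≤ h - h * (x ^ 2 / 2 + 1 / 12 * (1 / 2 + h ^ 2) * x ^ 4
        + h ^ 2 / 36 * x ^ 6 + h ^ 2 / 288 * x ^ 8 + h ^ 2 / 6480 * x ^ 10) := by
  have hu'' : ∀ y ∈ Icc 0 x₀, deriv (deriv u) y ≤ barrierCurvature h y := fun y hy =>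
    (hode y hy).trans_le (mul_le_barrierCurvature hh.le (hfu y hy) (hsq y hy))
  -- `deriv (deriv u) y < 0`, so it is not the junk value `0` of a non-differentiable `deriv u`.
  have hdu : ∀ y ∈ Icc 0 x₀, HasDerivAt (deriv u) (deriv (deriv u) y) y := fun y hy =>
    (differentiableAt_of_deriv_ne_zero
      ((hu'' y hy).trans_lt (barrierCurvature_neg hh y)).ne).hasDerivAt
  have hu : ∀ y ∈ Ioo 0 x₀, HasDerivAt u (deriv u y) y := fun y hy =>
    ((hC2.differentiableOn two_ne_zero y (Ioo_subset_Icc_self hy)).differentiableAt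
      (Icc_mem_nhds hy.1 hy.2)).hasDerivAt
  have hslope : ∀ y ∈ Icc 0 x₀, deriv u y ≤ barrierSlope h y := by
    rintro y ⟨hy0, hyx₀⟩
    have hsub : Icc 0 y ⊆ Icc 0 x₀ := Icc_subset_Icc_right hyx₀
    refine le_of_hasDerivAt_le hy0 (fun z hz => (hdu z (hsub hz)).continuousAt.continuousWithinAt)
      (fun z hz => hdu z (hsub (Ioo_subset_Icc_self hz))) (hasDerivAt_barrierSlope h)
      (fun z hz => hu'' z (hsub (Ioo_subset_Icc_self hz))) ?_
    simp [hu'0, barrierSlope]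
  rintro x ⟨hx0, hxx₀⟩
  refine le_of_hasDerivAt_le hx0 (hC2.continuousOn.mono (Icc_subset_Icc_right hxx₀))
    (fun z hz => hu z (Ioo_subset_Ioo_right hxx₀ hz)) (hasDerivAt_barrier h)
    (fun z hz => hslope z ⟨hz.1.le, hz.2.le.trans hxx₀⟩) ?_
  simp [hu0, barrier]

/-- Refined barrier estimate: with additionally `(u')² ≥ h²(x + x³/6)²` and
`x u' - u ≤ -h(1 + x²/2)`, one gets the degree-ten upper barrier for `u`. -/
theorem refined_barrier_estimate (u : ℝ → ℝ) (x₀ h : ℝ) (hx₀ : 0 < x₀) (hh : 0 < h)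
    (hC2 : ContDiffOn ℝ 2 u (Set.Icc 0 x₀))
    (hu0 : u 0 = h) (hu'0 : deriv u 0 = 0)
    (hode : ∀ x ∈ Set.Icc 0 x₀,
      deriv (deriv u) x = (1 + (deriv u x) ^ 2) * (x * deriv u x - u x))
    (hconc : ∀ x ∈ Set.Ioc 0 x₀, deriv (deriv u) x < 0)
    (hfu : ∀ x ∈ Set.Icc 0 x₀, x * deriv u x - u x ≤ -(h * (1 + x ^ 2 / 2)))
    (hsq : ∀ x ∈ Set.Icc 0 x₀,
      h ^ 2 * (x + x ^ 3 / 6) ^ 2 ≤ (deriv u x) ^ 2) :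
    ∀ x ∈ Set.Icc 0 x₀,
      u x ≤ h - h * (x ^ 2 / 2 + 1 / 12 * (1 / 2 + h ^ 2) * x ^ 4
        + h ^ 2 / 36 * x ^ 6 + h ^ 2 / 288 * x ^ 8 + h ^ 2 / 6480 * x ^ 10) :=
  refined_barrier_estimate_general u x₀ h hh hC2 hu0 hu'0 hode hfu hsq
end

section
/- Let u : ℝ × [0,T) → ℝ be smooth with u(a(t), t) = 0 = u(b(t), t), u_x(a(t), t) = √3, u_x(b(t), t) = −√3, and u_t = u_xx/(1 + u_x²) on a(t) < x < b(t), where a, b : [0,T) → ℝ are differentiable with a < b. Then the enclosed area |Ω_t| = 2·∫_{a(t)}^{b(t)} u(x,t) dx satisfies d/dt |Ω_t| = −4π/3. -/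
open MeasureTheory Real Set Filter Metric
open scoped Topology ContDiff

lemma abs_sub_le_of_uIoc {x c₀ c₁ : ℝ} (hx : x ∈ Set.uIoc c₀ c₁) :
    |x - c₀| ≤ |c₁ - c₀| := by
  rcases Set.mem_uIoc.1 hx with ⟨h1, h2⟩ | ⟨h1, h2⟩ <;>
  · have := le_abs_self (c₁ - c₀)
    have := neg_abs_le (c₁ - c₀)
    rw [abs_le]; constructor <;> linarith

/-- If the integrand vanishes at the moving endpoint at time `t₀`, the
moving-endpoint contribution has zero derivative. -/
lemma endpoint_deriv_zero (u : ℝ → ℝ → ℝ) (hu : Continuous (Function.uncurry u))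
    (c : ℝ → ℝ) (t₀ : ℝ) (hc : DifferentiableAt ℝ c t₀) (h0 : u t₀ (c t₀) = 0) :
    HasDerivAt (fun t => ∫ x in (c t₀)..(c t), u t x) 0 t₀ := by
  rw [hasDerivAt_iff_isLittleO]
  simp only [intervalIntegral.integral_same, smul_zero, sub_zero]
  rw [Asymptotics.isLittleO_iff]
  intro ε hε
  obtain ⟨C₁, hC₁⟩ := (hc.hasDerivAt.isBigO_sub).isBigOWith
  set C : ℝ := max C₁ 1 with hCdef
  have hC : (0:ℝ) < C := lt_of_lt_of_le one_pos (le_max_right _ _)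
  have hbig : ∀ᶠ t in 𝓝 t₀, |c t - c t₀| ≤ C * |t - t₀| := by
    filter_upwards [hC₁.bound] with t ht
    calc |c t - c t₀| = ‖c t - c t₀‖ := rfl
      _ ≤ C₁ * ‖t - t₀‖ := ht
      _ ≤ C * |t - t₀| := by
          have : (0:ℝ) ≤ |t - t₀| := abs_nonneg _
          exact mul_le_mul_of_nonneg_right (le_max_left _ _) this
  have htend : Filter.Tendsto (Function.uncurry u) (𝓝 (t₀, c t₀)) (𝓝 0) := by
    have := hu.continuousAt (x := (t₀, c t₀))
    rwa [ContinuousAt, Function.uncurry_apply_pair, h0] at this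
  have hsmall : ∀ᶠ p : ℝ × ℝ in 𝓝 (t₀, c t₀), ‖Function.uncurry u p‖ ≤ ε / C := by
    have hb : Metric.ball (0:ℝ) (ε / C) ∈ 𝓝 (0:ℝ) :=
      Metric.ball_mem_nhds _ (div_pos hε hC)
    filter_upwards [htend hb] with p hp
    have : dist (Function.uncurry u p) 0 < ε / C := hp
    rw [Real.dist_eq, sub_zero] at this
    exact le_of_lt this
  rw [Metric.eventually_nhds_iff] at hsmall
  obtain ⟨δ, hδ, hsmall⟩ := hsmall
  have hcc : ∀ᶠ t in 𝓝 t₀, |c t - c t₀| < δ := by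
    have := hc.continuousAt
    rw [Metric.continuousAt_iff] at this
    obtain ⟨δ', hδ', h'⟩ := this δ hδ
    filter_upwards [Metric.ball_mem_nhds t₀ hδ'] with t ht
    have := h' (Metric.mem_ball.1 ht)
    rwa [Real.dist_eq] at this
  filter_upwards [hbig, hcc, Metric.ball_mem_nhds t₀ hδ] with t h1 h2 h3
  have ht3 : |t - t₀| < δ := by rwa [Metric.mem_ball, Real.dist_eq] at h3
  have hub : ∀ x ∈ Set.uIoc (c t₀) (c t), ‖u t x‖ ≤ ε / C := by
    intro x hx
    have hxc : |x - c t₀| < δ := lt_of_le_of_lt (abs_sub_le_of_uIoc hx) h2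
    have : dist ((t, x) : ℝ × ℝ) (t₀, c t₀) < δ := by
      rw [Prod.dist_eq]
      simp only [Real.dist_eq]
      exact max_lt ht3 hxc
    exact hsmall this
  calc ‖∫ x in (c t₀)..(c t), u t x‖ ≤ (ε / C) * |c t - c t₀| :=
        intervalIntegral.norm_integral_le_of_norm_le_const hub
    _ ≤ (ε / C) * (C * |t - t₀|) := by
        apply mul_le_mul_of_nonneg_left h1 (le_of_lt (div_pos hε hC))
    _ = ε * |t - t₀| := by field_simp
    _ = ε * ‖t - t₀‖ := rfl

/-- Evolution of the enclosed area for a graphical symmetric lens under curve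
shortening flow with 120° angle condition: `d/dt |Ω_t| = -4π/3`, where
`|Ω_t| = 2 ∫_{a(t)}^{b(t)} u(x,t) dx`.  Here `u t x` denotes `u(x,t)`. -/
theorem area_evolution (u : ℝ → ℝ → ℝ) (a b : ℝ → ℝ) (T : ℝ) (hT : 0 < T)
    (hsmooth : ContDiff ℝ (⊤ : ℕ∞) (Function.uncurry u))
    (ha : Differentiable ℝ a) (hb : Differentiable ℝ b)
    (hab : ∀ t ∈ Set.Ico 0 T, a t < b t)
    (hbc : ∀ t ∈ Set.Ico 0 T, u t (a t) = 0 ∧ u t (b t) = 0)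
    (hbc' : ∀ t ∈ Set.Ico 0 T,
      deriv (u t) (a t) = Real.sqrt 3 ∧ deriv (u t) (b t) = -Real.sqrt 3)
    (hpde : ∀ t ∈ Set.Ico 0 T, ∀ x, a t < x → x < b t →
      deriv (fun s => u s x) t = deriv (deriv (u t)) x / (1 + (deriv (u t) x) ^ 2)) :
    ∀ t ∈ Set.Ico 0 T,
      deriv (fun s => 2 * ∫ x in a s..b s, u s x) t = -(4 * Real.pi) / 3 := by
  intro t₀ ht₀
  -- basic consequences of smoothness
  have h1 : ContDiff ℝ ∞ (Function.uncurry u) := hsmooth.of_le (by simp)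
  have hu_cont : Continuous (Function.uncurry u) := h1.continuous
  set w : ℝ × ℝ → ℝ := fun p => fderiv ℝ (Function.uncurry u) p (1, 0) with hw_def
  have hw_cont : Continuous w :=
    (hsmooth.continuous_fderiv (by simp)).clm_apply continuous_const
  have hcu : ∀ t, Continuous (u t) := fun t =>
    hu_cont.comp (continuous_const.prodMk continuous_id)
  have hw_deriv : ∀ t x, HasDerivAt (fun s => u s x) (w (t, x)) t := by
    intro t x
    have hf : HasFDerivAt (Function.uncurry u) (fderiv ℝ (Function.uncurry u) (t, x)) (t, x) :=
      (hsmooth.differentiable (by simp) (t, x)).hasFDerivAt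
    have hg : HasDerivAt (fun s : ℝ => ((s, x) : ℝ × ℝ)) ((1 : ℝ), (0 : ℝ)) t :=
      (hasDerivAt_id t).prodMk (hasDerivAt_const t x)
    exact hf.comp_hasDerivAt t hg
  set a₀ := a t₀
  set b₀ := b t₀
  have hab₀ : a₀ < b₀ := hab t₀ ht₀
  -- Step A : fixed-endpoints part
  have hA : HasDerivAt (fun t => ∫ x in a₀..b₀, u t x) (∫ x in a₀..b₀, w (t₀, x)) t₀ := by
    set K : Set (ℝ × ℝ) := Set.Icc (t₀ - 1) (t₀ + 1) ×ˢ Set.uIcc a₀ b₀ with hK_def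
    have hKc : IsCompact K := (isCompact_Icc).prod isCompact_uIcc
    obtain ⟨C, hC⟩ := hKc.exists_bound_of_continuousOn hw_cont.continuousOn
    refine (intervalIntegral.hasDerivAt_integral_of_dominated_loc_of_deriv_le
      (F := u) (F' := fun t x => w (t, x)) (bound := fun _ => C)
      (Metric.ball_mem_nhds t₀ one_pos) ?_ ?_ ?_ ?_ ?_ ?_).2
    · exact Filter.Eventually.of_forall fun t => (hcu t).aestronglyMeasurable
    · exact (hcu t₀).intervalIntegrable _ _
    · exact ((hw_cont.comp (continuous_const.prodMk continuous_id)).aestronglyMeasurable)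
    · refine Filter.Eventually.of_forall fun x hx t ht => ?_
      refine hC (t, x) ⟨?_, Set.uIoc_subset_uIcc hx⟩
      have : |t - t₀| < 1 := by rwa [Metric.mem_ball, Real.dist_eq] at ht
      have h' := abs_lt.1 this
      constructor
      · show t₀ - 1 ≤ t; linarith [h'.1]
      · show t ≤ t₀ + 1; linarith [h'.2]
    · exact intervalIntegrable_const
    · exact Filter.Eventually.of_forall fun x _ t _ => hw_deriv t x
  -- Step B : moving-endpoint parts
  have hB : HasDerivAt (fun t => ∫ x in b₀..(b t), u t x) 0 t₀ :=
    endpoint_deriv_zero u hu_cont b t₀ (hb t₀) (hbc t₀ ht₀).2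
  have hB' : HasDerivAt (fun t => ∫ x in a₀..(a t), u t x) 0 t₀ :=
    endpoint_deriv_zero u hu_cont a t₀ (ha t₀) (hbc t₀ ht₀).1
  -- decomposition
  have hdecomp : ∀ t, (∫ x in a t..b t, u t x) =
      (∫ x in a₀..b₀, u t x) + (∫ x in b₀..(b t), u t x) - (∫ x in a₀..(a t), u t x) := by
    intro t
    have hi : ∀ p q : ℝ, IntervalIntegrable (u t) volume p q := fun p q =>
      (hcu t).intervalIntegrable p q
    have e1 : (∫ x in a₀..(a t), u t x) + (∫ x in (a t)..(b t), u t x)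
        = ∫ x in a₀..(b t), u t x :=
      intervalIntegral.integral_add_adjacent_intervals (hi _ _) (hi _ _)
    have e2 : (∫ x in a₀..b₀, u t x) + (∫ x in b₀..(b t), u t x)
        = ∫ x in a₀..(b t), u t x :=
      intervalIntegral.integral_add_adjacent_intervals (hi _ _) (hi _ _)
    linarith
  have hF : HasDerivAt (fun t => ∫ x in a t..b t, u t x)
      ((∫ x in a₀..b₀, w (t₀, x)) + 0 - 0) t₀ := by
    have h := (hA.add hB).sub hB'
    exact h.congr_of_eventuallyEq (Filter.Eventually.of_forall hdecomp)
  -- Step C : value of the integral of w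
  set v : ℝ → ℝ := deriv (u t₀) with hv_def
  have hut : ContDiff ℝ ∞ (u t₀) := h1.comp (contDiff_const.prodMk contDiff_id)
  have hv_smooth : ContDiff ℝ ∞ v := by
    have := hut.iterate_deriv 1
    simpa using this
  have hv_hasDeriv : ∀ x, HasDerivAt v (deriv v x) x := fun x =>
    ((hv_smooth.differentiable (by simp)) x).hasDerivAt
  have hg : ∀ x, HasDerivAt (fun y => Real.arctan (v y))
      (deriv v x / (1 + (v x) ^ 2)) x := by
    intro x
    have h := (Real.hasDerivAt_arctan (v x)).comp x (hv_hasDeriv x)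
    rw [show deriv v x / (1 + v x ^ 2) = 1 / (1 + v x ^ 2) * deriv v x by ring]
    exact h
  have hne : ∀ x : ℝ, (1 : ℝ) + (v x) ^ 2 ≠ 0 := fun x => by positivity
  have hint : IntervalIntegrable (fun x => deriv v x / (1 + (v x) ^ 2)) volume a₀ b₀ := by
    apply Continuous.intervalIntegrable
    exact (hv_smooth.continuous_deriv (by simp)).div
      (continuous_const.add ((hv_smooth.continuous).pow 2)) hne
  have hFTC : (∫ x in a₀..b₀, deriv v x / (1 + (v x) ^ 2))
      = Real.arctan (v b₀) - Real.arctan (v a₀) :=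
    intervalIntegral.integral_eq_sub_of_hasDerivAt (fun x _ => hg x) hint
  have hcongr : (∫ x in a₀..b₀, w (t₀, x))
      = ∫ x in a₀..b₀, deriv v x / (1 + (v x) ^ 2) := by
    apply intervalIntegral.integral_congr_ae
    have hb0 : ∀ᵐ x : ℝ, x ≠ b₀ := by
      rw [MeasureTheory.ae_iff]
      have : {x : ℝ | ¬ x ≠ b₀} = {b₀} := by ext y; simp
      rw [this]
      exact measure_singleton b₀
    filter_upwards [hb0] with x hx hmem
    rw [Set.uIoc_of_le (le_of_lt hab₀)] at hmem
    have hx1 : a₀ < x := hmem.1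
    have hx2 : x < b₀ := lt_of_le_of_ne hmem.2 hx
    have h := hpde t₀ ht₀ x hx1 hx2
    rw [← (hw_deriv t₀ x).deriv]
    exact h
  -- arctan values
  have harct : Real.arctan (Real.sqrt 3) = Real.pi / 3 := by
    rw [← Real.tan_pi_div_three]
    exact Real.arctan_tan (by linarith [Real.pi_pos]) (by linarith [Real.pi_pos])
  have hva : v a₀ = Real.sqrt 3 := (hbc' t₀ ht₀).1
  have hvb : v b₀ = -Real.sqrt 3 := (hbc' t₀ ht₀).2
  have hI : (∫ x in a₀..b₀, w (t₀, x)) = -(2 * Real.pi) / 3 := by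
    rw [hcongr, hFTC, hva, hvb, Real.arctan_neg, harct]
    ring
  -- conclusion
  have hfinal : HasDerivAt (fun s => 2 * ∫ x in a s..b s, u s x)
      (2 * ((∫ x in a₀..b₀, w (t₀, x)) + 0 - 0)) t₀ := hF.const_mul 2
  rw [hfinal.deriv, hI]
  ring
end
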